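/- Let v₀, v₁, …, v₁₂ ∈ ℂ with v₁₂ = v₀ and v_{k+1} − v_k = r_k·e^{iπk/6} for some r_k ≥ 0, for each k = 0,…,11 (so the v_k are the vertices of a possibly degenerate convex 12-gon whose k-th edge has slope kπ/6 modulo π). Let p_k be a point on the segment [v_k, v_{k+1}] for each k = 0,…,11, and set p₁₂ = p₀. Then the length of the closed circuit through the p_k satisfies ∑_{k=0}^{11} |p_{k+1} − p_k| ≥ cos(π/12) · ∑_{k=0}^{11} r_k, i.e., the circuit is at least cos(π/12) times the perimeter of the 12-gon. -/

import Mathlib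

/-!
Write `u k = e^{iα_k}` for the direction of the k-th edge and `p k = v k + b k · u k`. Then
`p (k+1) - p k = (r k - b k) u k + b (k+1) u (k+1)`, and since consecutive directions make the
angle `θ = π/6`, the identity `‖x + y e^{iθ}‖² = (x + y)² cos² (θ/2) + (x - y)² sin² (θ/2)`
bounds each side of the circuit by `cos (θ/2) · (r k - b k + b (k+1))`. Summing, the `b k`
telescope away, because the directions close up after one turn.
-/

open Complex

lemma normSq_add_mul_exp (a b θ : ℝ) :
    normSq ((a : ℂ) + b * exp (θ * I)) =
      (Real.cos (θ / 2) * (a + b)) ^ 2 + ((a - b) * Real.sin (θ / 2)) ^ 2 := by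
  have hcos : Real.cos θ = 2 * Real.cos (θ / 2) ^ 2 - 1 := by rw [← Real.cos_two_mul]; ring_nf
  have hsin : Real.sin θ = 2 * Real.sin (θ / 2) * Real.cos (θ / 2) := by
    rw [← Real.sin_two_mul]; ring_nf
  simp only [normSq_apply, add_re, add_im, mul_re, mul_im, ofReal_re, ofReal_im,
    exp_ofReal_mul_I_re, exp_ofReal_mul_I_im]
  rw [hcos, hsin]
  linear_combination
    (4 * b ^ 2 * Real.cos (θ / 2) ^ 2 - (a - b) ^ 2) * Real.sin_sq_add_cos_sq (θ / 2)

lemma abs_cos_half_mul_add_le_norm_add_mul_exp (a b θ : ℝ) :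
    |Real.cos (θ / 2) * (a + b)| ≤ ‖(a : ℂ) + b * exp (θ * I)‖ := by
  refine abs_le_of_sq_le_sq ?_ (norm_nonneg _)
  rw [Complex.sq_norm, normSq_add_mul_exp]
  exact le_add_of_nonneg_right (sq_nonneg _)

lemma abs_cos_half_mul_add_le_norm_mul_exp_add_mul_exp (a b α θ : ℝ) :
    |Real.cos (θ / 2) * (a + b)| ≤ ‖(a : ℂ) * exp (α * I) + b * exp ((α + θ : ℝ) * I)‖ := by
  have hfactor : (a : ℂ) * exp (α * I) + b * exp ((α + θ : ℝ) * I)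
      = exp (α * I) * (a + b * exp (θ * I)) := by
    rw [ofReal_add, add_mul, exp_add]; ring
  rw [hfactor, norm_mul, norm_exp_ofReal_mul_I, one_mul]
  exact abs_cos_half_mul_add_le_norm_add_mul_exp a b θ

theorem abs_cos_half_mul_sum_le_sum_norm_sub {n : ℕ} {θ : ℝ} {α : ℕ → ℝ} {v p : ℕ → ℂ}
    {r : ℕ → ℝ} (hα : ∀ k, α (k + 1) = α k + θ) (hαn : exp (α n * I) = exp (α 0 * I))
    (hv : v n = v 0) (hp : p n = p 0)
    (hedge : ∀ k < n, v (k + 1) - v k = r k * exp (α k * I))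
    (hpk : ∀ k < n, ∃ s : ℝ, p k - v k = s * exp (α k * I)) :
    |Real.cos (θ / 2) * ∑ k ∈ Finset.range n, r k| ≤
      ∑ k ∈ Finset.range n, ‖p (k + 1) - p k‖ := by
  rcases Nat.eq_zero_or_pos n with rfl | hn
  · simp
  set b : ℕ → ℝ := fun k => ((p k - v k) / exp (α k * I)).re with hb_def
  have hb : ∀ k ≤ n, p k - v k = b k * exp (α k * I) := by
    have hb_lt : ∀ k < n, p k - v k = b k * exp (α k * I) := fun k hk => by
      obtain ⟨s, hs⟩ := hpk k hk
      simp [hb_def, hs, exp_ne_zero]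
    intro k hk
    rcases hk.lt_or_eq with hk | rfl
    · exact hb_lt k hk
    · simpa [hb_def, hv, hp, hαn] using hb_lt 0 hn
  have hbn : b n = b 0 := by simp only [hb_def, hv, hp, hαn]
  have hstep : ∀ k < n, p (k + 1) - p k =
      ((r k - b k : ℝ) : ℂ) * exp (α k * I) + b (k + 1) * exp ((α k + θ : ℝ) * I) := by
    intro k hk
    rw [← hα]
    push_cast
    linear_combination hb (k + 1) hk - hb k hk.le + hedge k hk
  calc |Real.cos (θ / 2) * ∑ k ∈ Finset.range n, r k|
      = |∑ k ∈ Finset.range n, Real.cos (θ / 2) * (r k - b k + b (k + 1))| := by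
        rw [← Finset.mul_sum, Finset.sum_congr rfl fun k _ =>
          show r k - b k + b (k + 1) = r k + (b (k + 1) - b k) by ring,
          Finset.sum_add_distrib, Finset.sum_range_sub, hbn, sub_self, add_zero]
    _ ≤ ∑ k ∈ Finset.range n, |Real.cos (θ / 2) * (r k - b k + b (k + 1))| :=
        Finset.abs_sum_le_sum_abs _ _
    _ ≤ ∑ k ∈ Finset.range n, ‖p (k + 1) - p k‖ := Finset.sum_le_sum fun k hk => by
        rw [hstep k (Finset.mem_range.mp hk)]
        exact abs_cos_half_mul_add_le_norm_mul_exp_add_mul_exp _ _ _ _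

theorem circuit_in_12gon_length (v p : ℕ → ℂ) (r : ℕ → ℝ)
    (hv : v 12 = v 0) (hp : p 12 = p 0)
    (hedge : ∀ k < 12, v (k + 1) - v k =
      (r k : ℂ) * Complex.exp (((Real.pi * (k : ℝ) / 6 : ℝ) : ℂ) * Complex.I))
    (hpk : ∀ k < 12, p k ∈ segment ℝ (v k) (v (k + 1))) :
    Real.cos (Real.pi / 12) * ∑ k ∈ Finset.range 12, r k ≤
      ∑ k ∈ Finset.range 12, ‖p (k + 1) - p k‖ := by
  have hpk_ray : ∀ k < 12, ∃ s : ℝ,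
      p k - v k = s * exp (((Real.pi * (k : ℝ) / 6 : ℝ) : ℂ) * I) := fun k hk => by
    have hmem := hpk k hk
    rw [segment_eq_image'] at hmem
    obtain ⟨s, -, hs⟩ := hmem
    exact ⟨s * r k, by rw [← hs, add_sub_cancel_left, hedge k hk, real_smul]; push_cast; ring⟩
  have hturn : exp (((Real.pi * ((12 : ℕ) : ℝ) / 6 : ℝ) : ℂ) * I) =
      exp (((Real.pi * ((0 : ℕ) : ℝ) / 6 : ℝ) : ℂ) * I) := by
    push_cast
    rw [mul_zero, zero_div, zero_mul, exp_zero, ← exp_two_pi_mul_I]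
    ring_nf
  have h := abs_cos_half_mul_sum_le_sum_norm_sub (θ := Real.pi / 6)
    (fun k => by push_cast; ring) hturn hv hp hedge hpk_ray
  rw [show Real.pi / 6 / 2 = Real.pi / 12 by ring] at h
  exact (le_abs_self _).trans h
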